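/- Suppose a rooted tree C has a function σ: V(C) → ℤ≥1 with σ(v) ≥ β·σ(w) for every node v with child w, and a fat preorder numbering p with intervals [p̄(v), p(v)), [p(v), q(v)), [q(v), q̄(v)) satisfying: (i) descendants of v are exactly the nodes w with p(w) ∈ [p(v), q(v)); (ii) no node has p-number in [p̄(v), p(v)) ∪ [q(v), q̄(v)); (iii) q̄(v) − p̄(v) = c·σ(v)^e and p(v) − p̄(v) = q̄(v) − q(v) = σ(v)^e, where c − 2 ≤ β^e. Then for nodes x, y, letting a be the first ancestor of x with (c−2)·σ(a)^e > |p(x) − p(y)|: if y descends from a then a = nca(x, y); otherwise the parent of a equals nca(x, y). -/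
import Mathlib


/-- A finite rooted tree, given by a parent function and a depth function
witnessing acyclicity. The root is its own parent. -/
structure FinRootedTree (V : Type) [Fintype V] [DecidableEq V] where
  parent : V → V
  root : V
  parent_root : parent root = root
  depth : V → ℕ
  depth_root : depth root = 0
  depth_parent : ∀ v, v ≠ root → depth (parent v) + 1 = depth v

namespace FinRootedTree

variable {V : Type} [Fintype V] [DecidableEq V]

/-- `a` is an ancestor of `v` (every node is an ancestor of itself). -/
def IsAnc (T : FinRootedTree V) (a v : V) : Prop := ∃ k : ℕ, T.parent^[k] v = a

/-- `w` is a child of `v`. -/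
def IsChild (T : FinRootedTree V) (v w : V) : Prop := T.parent w = v ∧ w ≠ T.root

/-- The number of descendants of `v` (a node is a descendant of itself). -/
noncomputable def s (T : FinRootedTree V) (v : V) : ℕ := Nat.card {w : V // T.IsAnc v w}

/-- The height of the tree: maximum number of edges on a root-to-leaf path. -/
noncomputable def height (T : FinRootedTree V) : ℕ := Finset.univ.sup T.depth

/-- `a` is the nearest common ancestor of `x` and `y`. -/
def IsNca (T : FinRootedTree V) (x y a : V) : Prop :=
  T.IsAnc a x ∧ T.IsAnc a y ∧ ∀ b, T.IsAnc b x → T.IsAnc b y → T.IsAnc b a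

/-- The edge from `v` to its child `w` is heavy: `s(w) > s(v)/2`. -/
def HeavyEdge (T : FinRootedTree V) (v w : V) : Prop :=
  T.IsChild v w ∧ 2 * T.s w > T.s v

/-- `u` and `v` lie on the same heavy path: they are connected after
deleting every edge between a light child and its parent. -/
def SameHP (T : FinRootedTree V) : V → V → Prop :=
  Relation.EqvGen (fun u v => T.HeavyEdge u v ∨ T.HeavyEdge v u)

end FinRootedTree


namespace FinRootedTree

variable {V : Type} [Fintype V] [DecidableEq V]

lemma isAnc_trans' (T : FinRootedTree V) {a b v : V} (h1 : T.IsAnc a b)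
    (h2 : T.IsAnc b v) : T.IsAnc a v := by
  obtain ⟨j, hj⟩ := h1; obtain ⟨k, hk⟩ := h2
  exact ⟨j + k, by rw [Function.iterate_add_apply, hk, hj]⟩

lemma isAnc_root' (T : FinRootedTree V) (v : V) : T.IsAnc T.root v := by
  suffices h : ∀ n v, T.depth v = n → T.parent^[n] v = T.root from ⟨T.depth v, h _ v rfl⟩
  intro n
  induction n using Nat.strong_induction_on with
  | _ n ih =>
    intro v hv
    by_cases hr : v = T.root
    · subst hr
      rw [T.depth_root] at hv
      subst hv
      rfl
    · have hd := T.depth_parent v hr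
      have hn : n = T.depth (T.parent v) + 1 := by omega
      subst hn
      rw [Function.iterate_succ_apply]
      exact ih _ (by omega) _ rfl

lemma isAnc_parent' (T : FinRootedTree V) {b a : V} (h : T.IsAnc b a) (hne : b ≠ a) :
    T.IsAnc b (T.parent a) := by
  obtain ⟨k, hk⟩ := h
  cases k with
  | zero => exact absurd hk.symm hne
  | succ k => exact ⟨k, by rw [← Function.iterate_succ_apply]; exact hk⟩

end FinRootedTree

/-- Correctness of the high-level nca algorithm on a fat preorder numbering:
letting `a` be the first (deepest) ancestor of `x` with
`(c-2)·σ(a)^e > |p x - p y|`, if `y` descends from `a` then `a = nca(x,y)`,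
and otherwise `parent a = nca(x,y)`. -/
theorem stmt_5 {V : Type} [Fintype V] [DecidableEq V] (T : FinRootedTree V)
    (β : ℝ) (e : ℕ) (c : ℤ) (σ p q pbar qbar : V → ℤ)
    (hβ : 1 < β) (he : 1 < e) (hc : 2 < c) (hcβ : (c : ℝ) - 2 ≤ β ^ e)
    (hσ1 : ∀ v, 1 ≤ σ v)
    (hσ : ∀ v w, T.IsChild v w → β * (σ w : ℝ) ≤ (σ v : ℝ))
    (hi : ∀ v w, T.IsAnc v w ↔ p w ∈ Set.Ico (p v) (q v))
    (hii : ∀ v w, p w ∉ Set.Ico (pbar v) (p v) ∪ Set.Ico (q v) (qbar v))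
    (hiii : ∀ v, qbar v - pbar v = c * σ v ^ e ∧ p v - pbar v = σ v ^ e ∧
      qbar v - q v = σ v ^ e)
    (x y a : V)
    (hax : T.IsAnc a x)
    (hap : (c - 2) * σ a ^ e > |p x - p y|)
    (hfirst : ∀ b, T.IsAnc b x → (c - 2) * σ b ^ e > |p x - p y| → T.IsAnc b a) :
    (T.IsAnc a y → T.IsNca x y a) ∧
    (¬ T.IsAnc a y → T.IsNca x y (T.parent a)) := by
  have hq : ∀ v, q v - p v = (c - 2) * σ v ^ e := by
    intro v
    obtain ⟨h1, h2, h3⟩ := hiii v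
    linear_combination h1 - h2 - h3
  have hca : ∀ b, T.IsAnc b x → T.IsAnc b y → T.IsAnc b a := by
    intro b hbx hby
    apply hfirst b hbx
    have hx := Set.mem_Ico.mp ((hi b x).mp hbx)
    have hy := Set.mem_Ico.mp ((hi b y).mp hby)
    rw [gt_iff_lt, abs_lt]
    constructor <;> [skip; skip] <;> linarith [hq b]
  constructor
  · intro hay
    exact ⟨hax, hay, hca⟩
  · intro hay
    have hne : a ≠ T.root := by
      intro h
      exact hay (h ▸ T.isAnc_root' y)
    have hchild : T.IsChild (T.parent a) a := ⟨rfl, hne⟩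
    have ha'x : T.IsAnc (T.parent a) x := by
      obtain ⟨k, hk⟩ := hax
      exact ⟨k + 1, by rw [Function.iterate_succ_apply', hk]⟩
    have hkey : (c - 2) * σ a ^ e ≤ σ (T.parent a) ^ e := by
      have hb : β * (σ a : ℝ) ≤ (σ (T.parent a) : ℝ) := hσ _ a hchild
      have h1 : (1 : ℝ) ≤ (σ a : ℝ) := by exact_mod_cast hσ1 a
      have h0 : (0 : ℝ) ≤ (σ a : ℝ) := by linarith
      have h2 : ((c : ℝ) - 2) * (σ a : ℝ) ^ e ≤ (β * (σ a : ℝ)) ^ e := by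
        rw [mul_pow]
        have hp : (0 : ℝ) ≤ (σ a : ℝ) ^ e := pow_nonneg h0 e
        nlinarith
      have h3 : (β * (σ a : ℝ)) ^ e ≤ (σ (T.parent a) : ℝ) ^ e :=
        pow_le_pow_left₀ (mul_nonneg (by linarith) h0) hb e
      have := h2.trans h3
      exact_mod_cast this
    have hxa' := Set.mem_Ico.mp ((hi (T.parent a) x).mp ha'x)
    have habs := abs_lt.mp hap
    obtain ⟨h2a, h2b, h2c⟩ := hiii (T.parent a)
    have hlb : pbar (T.parent a) ≤ p y := by linarith
    have hub : p y < qbar (T.parent a) := by linarith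
    have hnot := hii (T.parent a) y
    have hya' : T.IsAnc (T.parent a) y := by
      rw [hi, Set.mem_Ico]
      rcases lt_or_ge (p y) (p (T.parent a)) with h | h
      · exact absurd (Set.mem_union_left _ (Set.mem_Ico.mpr ⟨hlb, h⟩)) hnot
      rcases lt_or_ge (p y) (q (T.parent a)) with h' | h'
      · exact ⟨h, h'⟩
      · exact absurd (Set.mem_union_right _ (Set.mem_Ico.mpr ⟨h', hub⟩)) hnot
    refine ⟨ha'x, hya', ?_⟩
    intro b hbx hby
    have hba := hca b hbx hby
    have hne' : b ≠ a := fun h => hay (h ▸ hby)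
    exact T.isAnc_parent' hba hne'
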